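/- If x ∈ Γ_k^n, then for every index j, the truncated vector x|j (with j-th coordinate set to 0, viewed as a point of ℝ^n) lies in Γ_{k-1}^n; equivalently, s_i(x|j) > 0 for i = 1,...,k-1. -/

import Mathlib

open Finset

/-- The `k`-th elementary symmetric polynomial of `x ∈ ℝⁿ`. -/
noncomputable def esymm (n k : ℕ) (x : Fin n → ℝ) : ℝ :=
  ∑ A ∈ Finset.powersetCard k (Finset.univ : Finset (Fin n)), ∏ i ∈ A, x i

/-- The Gårding cone `Γₖⁿ = {x : sₗ(x) > 0, l = 1,…,k}`. -/
def GammaK (n k : ℕ) (x : Fin n → ℝ) : Prop :=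
  ∀ l, 1 ≤ l → l ≤ k → 0 < esymm n l x

/-!
Write `x = (a, y)` with `a = x j`, so that `s_i(x) = s_i(y) + a s_{i-1}(y)` and `s_i(x|j) = s_i(y)`.
By induction on `k` it remains to show `s_l(y) > 0` for `l = k - 1`, knowing `s_i(y) > 0` for
`i < l`. If `s_l(y) ≤ 0`, translate all coordinates by the same `t ≥ 0`. Translation keeps
`s_1, …, s_k` positive (their expansions in `t` have nonnegative coefficients) and `s_l(y + t) > 0`
for large `t`, so by the intermediate value theorem `s_l(y + t) = 0` for some `t ≥ 0`, while
`s_{l-1}(y + t) > 0` and `s_{l+1}(y + t) = s_k(x + t) > 0`. This contradicts the degenerate case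
of Newton's inequality: for real `y`, `s_r(y) > 0` and `s_{r+1}(y) = 0` force `s_{r+2}(y) ≤ 0`.
-/

open Polynomial

namespace Multiset

section CommSemiring

variable {R : Type*} [CommSemiring R]

theorem esymm_zero (s : Multiset R) : s.esymm 0 = 1 := by
  simp [esymm]

theorem esymm_cons_succ (a : R) (s : Multiset R) (k : ℕ) :
    (a ::ₘ s).esymm (k + 1) = s.esymm (k + 1) + a * s.esymm k := by
  simp only [esymm, powersetCard_cons, map_add, sum_add, map_map, Function.comp_def, prod_cons,
    sum_map_mul_left]

theorem esymm_eq_zero_of_card_lt {s : Multiset R} {k : ℕ} (h : card s < k) : s.esymm k = 0 := by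
  simp [esymm, powersetCard_eq_empty k h]

theorem esymm_card (s : Multiset R) : s.esymm (card s) = s.prod := by
  induction s using Multiset.induction_on with
  | empty => simp [esymm]
  | cons a t ih =>
    rw [card_cons, esymm_cons_succ, ih, prod_cons, esymm_eq_zero_of_card_lt (Nat.lt_succ_self _),
      zero_add]

theorem esymm_zero_cons (s : Multiset R) (k : ℕ) : (0 ::ₘ s).esymm k = s.esymm k := by
  cases k with
  | zero => rw [esymm_zero, esymm_zero]
  | succ k => rw [esymm_cons_succ, zero_mul, add_zero]

theorem natDegree_prod_X_add_C_le (s : Multiset R) :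
    (s.map fun a => X + C a).prod.natDegree ≤ card s := by
  refine (natDegree_multiset_prod_le _).trans ((sum_le_card_nsmul _ 1 fun d hd => ?_).trans ?_)
  · obtain ⟨p, hp, rfl⟩ := mem_map.1 hd
    obtain ⟨a, -, rfl⟩ := mem_map.1 hp
    exact natDegree_add_C.trans_le natDegree_X_le
  · simp

theorem esymm_map_add_const (s : Multiset R) (t : R) {i : ℕ} (hi : i ≤ card s) :
    (s.map (· + t)).esymm i = ∑ n ∈ Finset.range (i + 1),
      ((n + (card s - i)).choose (card s - i) : R) * s.esymm (i - n) * t ^ n := by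
  set m := card s
  set P : R[X] := (s.map fun a => X + C a).prod
  have hcomp : ((s.map (· + t)).map fun a => X + C a).prod = P.comp (X + C t) := by
    rw [multiset_prod_comp, map_map, map_map]
    refine congrArg Multiset.prod (map_congr rfl fun a _ => ?_)
    simp only [Function.comp_apply, add_comp, X_comp, C_comp, C_add]
    ring
  have hcoeff : (s.map (· + t)).esymm i = (P.comp (X + C t)).coeff (m - i) := by
    rw [← hcomp, prod_X_add_C_coeff _ (by rw [card_map]; omega), card_map,
      show m - (m - i) = i by omega]
  have hdeg : (hasseDeriv (m - i) P).natDegree < i + 1 := by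
    have := natDegree_hasseDeriv_le P (m - i)
    have : P.natDegree ≤ m := natDegree_prod_X_add_C_le s
    omega
  rw [hcoeff, ← taylor_apply, taylor_coeff, eval_eq_sum_range' hdeg]
  refine Finset.sum_congr rfl fun n hn => ?_
  rw [Finset.mem_range] at hn
  rw [hasseDeriv_coeff, prod_X_add_C_coeff s (by omega), show m - (n + (m - i)) = i - n by omega]

end CommSemiring

theorem esymm_sq_sub_two_mul_esymm {R : Type*} [CommRing R] (s : Multiset R) (r : ℕ)
    (hs : card s = r + 2) :
    s.esymm (r + 1) ^ 2 - 2 * s.esymm (r + 2) * s.esymm r = (s.map (· ^ 2)).esymm (r + 1) := by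
  induction s using Multiset.induction_on generalizing r with
  | empty => simp at hs
  | cons a t ih =>
    rw [card_cons, add_left_inj] at hs
    have htop : t.esymm (r + 1) = t.prod := hs ▸ esymm_card t
    have hsq_top : (t.map (· ^ 2)).esymm (r + 1) = t.prod ^ 2 := by
      rw [← hs, ← card_map (· ^ 2) t, esymm_card, prod_map_pow, map_id']
    simp only [map_cons, esymm_cons_succ, htop, hsq_top,
      esymm_eq_zero_of_card_lt (show card t < r + 2 by omega)]
    cases r with
    | zero =>
      obtain ⟨b, rfl⟩ := card_eq_one.1 hs
      simp only [prod_singleton, esymm_zero, mul_one, zero_add, map_singleton]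
      ring
    | succ r =>
      have ih' := ih r hs
      rw [htop] at ih'
      rw [esymm_cons_succ]
      linear_combination a ^ 2 * ih'

section Real

theorem esymm_nonneg {s : Multiset ℝ} (hs : ∀ y ∈ s, 0 ≤ y) (k : ℕ) : 0 ≤ s.esymm k :=
  sum_nonneg fun _ hx => by
    obtain ⟨t, ht, rfl⟩ := mem_map.1 hx
    exact prod_nonneg fun y hy => hs y (mem_of_le (mem_powersetCard.1 ht).1 hy)

theorem esymm_pos {s : Multiset ℝ} (hs : ∀ y ∈ s, 0 < y) {k : ℕ} (hk : k ≤ card s) :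
    0 < s.esymm k := by
  obtain ⟨t, ht⟩ := exists_mem_of_ne_zero (card_pos.1 (by simpa using Nat.choose_pos hk) :
    s.powersetCard k ≠ 0)
  have hprod_pos : ∀ u ∈ s.powersetCard k, 0 < u.prod := fun u hu =>
    prod_pos fun y hy => hs y (mem_of_le (mem_powersetCard.1 hu).1 hy)
  calc 0 < t.prod := hprod_pos t ht
    _ ≤ s.esymm k := single_le_sum (fun x hx => by
          obtain ⟨u, hu, rfl⟩ := mem_map.1 hx
          exact (hprod_pos u hu).le) _ (mem_map_of_mem _ ht)

theorem esymm_add_two_nonpos_of_card_eq {s : Multiset ℝ} {r : ℕ} (hs : card s = r + 2)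
    (hr : 0 < s.esymm r) (hr1 : s.esymm (r + 1) = 0) : s.esymm (r + 2) ≤ 0 := by
  have hid := esymm_sq_sub_two_mul_esymm s r hs
  have hsq := esymm_nonneg (s := s.map (· ^ 2)) (by simp [sq_nonneg]) (r + 1)
  rw [hr1] at hid
  nlinarith

theorem exists_card_eq_esymm_derivative (s : Multiset ℝ) :
    ∃ t : Multiset ℝ, card t = card s - 1 ∧
      ∀ i, (card s : ℝ) * t.esymm i = ((card s - i : ℕ) : ℝ) * s.esymm i := by
  set m := card s
  obtain hm0 | hm0 := Nat.eq_zero_or_pos m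
  · refine ⟨0, by simp [hm0], fun i => ?_⟩
    simp [hm0]
  set P : ℝ[X] := (s.map fun a => X + C a).prod with hP
  have hP_eq : P = ((s.map Neg.neg).map fun a => X - C a).prod := by
    simp only [hP, map_map, Function.comp_def, map_neg, sub_neg_eq_add]
  have hP_deg : P.natDegree = m := by
    rw [hP_eq, natDegree_multiset_prod_X_sub_C_eq_card, card_map]
  have hP_roots : card P.roots = m := by
    rw [hP_eq, roots_multiset_prod_X_sub_C, card_map]
  set Q := derivative P
  -- Rolle: between consecutive roots of `P` lies a root of `Q`, so `Q` is again real-rooted.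
  have hrolle : m ≤ card Q.roots + 1 := hP_roots ▸ card_roots_le_derivative P
  have hQ_deg_le : Q.natDegree ≤ m - 1 := hP_deg ▸ natDegree_derivative_le P
  have hQ_roots_le := card_roots' Q
  have hQ_deg : Q.natDegree = m - 1 := by omega
  have hQ_roots : card Q.roots = Q.natDegree := by omega
  have hQ_coeff : ∀ i ≤ m - 1,
      Q.coeff (m - 1 - i) = ((m - i : ℕ) : ℝ) * s.esymm i := by
    intro i hi
    rw [coeff_derivative, show m - 1 - i + 1 = m - i by omega, hP,
      prod_X_add_C_coeff s (by omega), show m - (m - i) = i by omega,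
      show m - i = m - 1 - i + 1 by omega]
    push_cast
    ring
  have hQ_vieta : ∀ i ≤ m - 1,
      Q.coeff (m - 1 - i) = Q.leadingCoeff * (Q.roots.map Neg.neg).esymm i := by
    intro i hi
    rw [coeff_eq_esymm_roots_of_card hQ_roots (by omega), esymm_neg, hQ_deg,
      show m - 1 - (m - 1 - i) = i by omega, mul_assoc]
  have hQ_lead : Q.leadingCoeff = m := by
    have h0 := (hQ_vieta 0 (Nat.zero_le _)).symm.trans (hQ_coeff 0 (Nat.zero_le _))
    simpa [esymm_zero] using h0
  refine ⟨Q.roots.map Neg.neg, by rw [card_map, hQ_roots, hQ_deg], fun i => ?_⟩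
  rcases le_or_gt i (m - 1) with hi | hi
  · rw [← hQ_lead, ← hQ_vieta i hi, hQ_coeff i hi]
  · rw [esymm_eq_zero_of_card_lt (by rwa [card_map, hQ_roots, hQ_deg]),
      Nat.sub_eq_zero_of_le (by omega), Nat.cast_zero, zero_mul, mul_zero]

/-- Differentiating `∏ (X + a)` keeps the signs of `s_r, s_{r+1}, s_{r+2}` and lowers `card s`,
down to the case `card s = r + 2`. -/
theorem esymm_add_two_nonpos {s : Multiset ℝ} {r : ℕ} (hr : 0 < s.esymm r)
    (hr1 : s.esymm (r + 1) = 0) : s.esymm (r + 2) ≤ 0 := by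
  induction hm : card s using Nat.strong_induction_on generalizing s with
  | _ m ih =>
    rcases lt_trichotomy m (r + 2) with hlt | heq | hgt
    · exact (esymm_eq_zero_of_card_lt (hm ▸ hlt)).le
    · exact esymm_add_two_nonpos_of_card_eq (hm ▸ heq) hr hr1
    obtain ⟨t, ht, hts⟩ := exists_card_eq_esymm_derivative s
    rw [hm] at ht hts
    have hm_pos : (0 : ℝ) < m := by exact_mod_cast (show 0 < m by omega)
    have hcoeff_pos : ∀ i ≤ r + 2, (0 : ℝ) < ((m - i : ℕ) : ℝ) := fun i hi => by
      exact_mod_cast Nat.sub_pos_of_lt (by omega)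
    have htr : 0 < t.esymm r := pos_of_mul_pos_right
      ((hts r).symm ▸ mul_pos (hcoeff_pos r (by omega)) hr) hm_pos.le
    have htr1 : t.esymm (r + 1) = 0 := by
      simpa [hr1, hm_pos.ne'] using hts (r + 1)
    have htr2 := ih (m - 1) (by omega) htr htr1 ht
    have hts2 := hts (r + 2)
    nlinarith [hcoeff_pos (r + 2) le_rfl]

theorem continuous_esymm_map_add_const (s : Multiset ℝ) (i : ℕ) :
    Continuous fun t : ℝ => (s.map (· + t)).esymm i := by
  rcases le_or_gt i (card s) with hi | hi
  · simp_rw [esymm_map_add_const s _ hi]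
    fun_prop
  · exact continuous_const.congr fun t =>
      (esymm_eq_zero_of_card_lt (by rwa [card_map])).symm

theorem exists_nonneg_forall_add_pos (s : Multiset ℝ) : ∃ t ≥ 0, ∀ y ∈ s, 0 < y + t := by
  have habs : ∀ x ∈ s.map abs, 0 ≤ x := fun _ hx => by
    obtain ⟨z, -, rfl⟩ := mem_map.1 hx
    exact abs_nonneg z
  refine ⟨(s.map abs).sum + 1, by linarith [sum_nonneg habs], fun y hy => ?_⟩
  linarith [single_le_sum habs _ (mem_map_of_mem abs hy), neg_abs_le y]

def EsymmPos (k : ℕ) (s : Multiset ℝ) : Prop :=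
  ∀ i, 1 ≤ i → i ≤ k → 0 < s.esymm i

theorem esymmPos_zero_cons_iff {k : ℕ} {s : Multiset ℝ} :
    EsymmPos k (0 ::ₘ s) ↔ EsymmPos k s := by
  simp only [EsymmPos, esymm_zero_cons]

theorem EsymmPos.map_add_const {k : ℕ} {s : Multiset ℝ} (hs : EsymmPos k s) {t : ℝ}
    (ht : 0 ≤ t) : EsymmPos k (s.map (· + t)) := by
  intro i hi hik
  have hcard : i ≤ card s := by
    by_contra! h
    exact (hs i hi hik).ne' (esymm_eq_zero_of_card_lt h)
  rw [esymm_map_add_const s t hcard]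
  refine Finset.sum_pos' (fun n hn => ?_) ⟨0, by simp, by simpa using hs i hi hik⟩
  have hs_nonneg : 0 ≤ s.esymm (i - n) := by
    rcases Nat.eq_zero_or_pos (i - n) with h | h
    · simp [h, esymm_zero]
    · exact (hs (i - n) h (by omega)).le
  positivity

theorem EsymmPos.of_cons {k : ℕ} {a : ℝ} {s : Multiset ℝ} (h : EsymmPos (k + 1) (a ::ₘ s)) :
    EsymmPos k s := by
  induction k with
  | zero => intro i hi hik; omega
  | succ k ih =>
    have hlow : EsymmPos k s := ih fun i hi hik => h i hi (by omega)
    intro i hi hik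
    obtain hik | rfl : i ≤ k ∨ i = k + 1 := by omega
    · exact hlow i hi hik
    by_contra! hneg
    have hcard : k + 1 ≤ card s := by
      by_contra! hlt
      exact (h (k + 2) (by omega) le_rfl).ne' (esymm_eq_zero_of_card_lt (by simpa using hlt))
    obtain ⟨M, hM0, hM⟩ := exists_nonneg_forall_add_pos s
    have hpos_M : 0 < (s.map (· + M)).esymm (k + 1) :=
      esymm_pos (by simpa using hM) (by rwa [card_map])
    obtain ⟨t, ⟨ht0, -⟩, hzero⟩ := intermediate_value_Icc hM0
      (continuous_esymm_map_add_const s (k + 1)).continuousOn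
      (⟨by simpa using hneg, hpos_M.le⟩ : (0 : ℝ) ∈ Set.Icc _ _)
    replace hzero : (s.map (· + t)).esymm (k + 1) = 0 := hzero
    have hbelow : 0 < (s.map (· + t)).esymm k := by
      rcases Nat.eq_zero_or_pos k with rfl | hk
      · simp [esymm_zero]
      · exact hlow.map_add_const ht0 k hk le_rfl
    have habove : 0 < (s.map (· + t)).esymm (k + 2) := by
      have := h.map_add_const ht0 (k + 2) (by omega) le_rfl
      rwa [map_cons, esymm_cons_succ, hzero, mul_zero, add_zero] at this
    exact habove.not_ge (esymm_add_two_nonpos hbelow hzero)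

end Real

end Multiset

theorem gammaK_iff_esymmPos {n k : ℕ} {x : Fin n → ℝ} :
    GammaK n k x ↔ (univ.val.map x).EsymmPos k := by
  simp only [GammaK, Multiset.EsymmPos, esymm, Finset.esymm_map_val]

theorem map_univ_val_eq_cons {ι α : Type*} [Fintype ι] [DecidableEq ι] (y : ι → α)
    (j : ι) :
    univ.val.map y = y j ::ₘ (univ.erase j).val.map y := by
  rw [← Multiset.map_cons, erase_val, Multiset.cons_erase (mem_univ j)]

/-- If x ∈ Γₖⁿ then x|j ∈ Γ_{k-1}ⁿ. -/
theorem update_mem_GammaK (n k : ℕ) (x : Fin n → ℝ) (hx : GammaK n k x) (j : Fin n) :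
    GammaK n (k - 1) (Function.update x j 0) := by
  have hrest : (univ.erase j).val.map (Function.update x j 0) = (univ.erase j).val.map x :=
    Multiset.map_congr rfl fun i hi =>
      Function.update_of_ne (ne_of_mem_erase (Finset.mem_def.2 hi)) 0 x
  rw [gammaK_iff_esymmPos, map_univ_val_eq_cons] at hx ⊢
  rw [Function.update_self, hrest, Multiset.esymmPos_zero_cons_iff]
  obtain _ | k := k
  · exact fun i hi hik => absurd hik (by omega)
  · exact hx.of_cons
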